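/- arXiv:2504.21811 — 6 statements merged into one kernel-verified Lean document; each statement's English description precedes it below -/
import Mathlib

section
/- Let M be a set and let δ be a metric on X = M × [1, ∞) satisfying: (i) |t − t′| ≤ δ((x, t), (x′, t′)) for all x, x′ ∈ M and t, t′ ≥ 1, and (ii) δ((x, t), (x, t′)) ≤ |t − t′| for all x ∈ M, t, t′ ≥ 1. Suppose A₁, A₂ ⊆ [1, ∞) satisfy A₁ ∪ A₂ = [1, ∞) and form an excisive pair, i.e. for every r > 0 there exists R > 0 such that N_r(A₁) ∩ N_r(A₂) ⊆ N_R(A₁ ∩ A₂) (neighbourhoods in [1,∞)). Then M × A₁ and M × A₂ form an excisive pair in (X, δ): for every r > 0 there is R′ > 0 with N_r(M × A₁) ∩ N_r(M × A₂) ⊆ N_{R′}(M × (A₁ ∩ A₂)). -/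
theorem warped_product_excisive_general {M : Type*}
    (δ : (M × {t : ℝ // 1 ≤ t}) → (M × {t : ℝ // 1 ≤ t}) → ℝ)
    (hlow : ∀ (x x' : M) (t t' : {t : ℝ // 1 ≤ t}), |t.1 - t'.1| ≤ δ (x, t) (x', t'))
    (hup : ∀ (x : M) (t t' : {t : ℝ // 1 ≤ t}), δ (x, t) (x, t') ≤ |t.1 - t'.1|)
    (A₁ A₂ : Set {t : ℝ // 1 ≤ t})
    (hex : ∀ r > (0 : ℝ), ∃ R > (0 : ℝ), ∀ t : {t : ℝ // 1 ≤ t},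
      (∃ a ∈ A₁, |t.1 - a.1| < r) → (∃ a ∈ A₂, |t.1 - a.1| < r) →
      ∃ a ∈ A₁ ∩ A₂, |t.1 - a.1| < R) :
    ∀ r > (0 : ℝ), ∃ R' > (0 : ℝ), ∀ p : M × {t : ℝ // 1 ≤ t},
      (∃ q : M × {t : ℝ // 1 ≤ t}, q.2 ∈ A₁ ∧ δ p q < r) →
      (∃ q : M × {t : ℝ // 1 ≤ t}, q.2 ∈ A₂ ∧ δ p q < r) →
      ∃ q : M × {t : ℝ // 1 ≤ t}, q.2 ∈ A₁ ∩ A₂ ∧ δ p q < R' := by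
  intro r hr
  obtain ⟨R, hR, hRspec⟩ := hex r hr
  refine ⟨R, hR, ?_⟩
  rintro ⟨x, t⟩ ⟨⟨y₁, t₁⟩, h₁, hd₁⟩ ⟨⟨y₂, t₂⟩, h₂, hd₂⟩
  -- (i) makes the height 1-Lipschitz, so `t` is `r`-close to both `A₁` and `A₂` in `[1, ∞)`.
  obtain ⟨a, ha, haR⟩ := hRspec t
    ⟨t₁, h₁, (hlow x y₁ t t₁).trans_lt hd₁⟩
    ⟨t₂, h₂, (hlow x y₂ t t₂).trans_lt hd₂⟩
  -- (ii): moving vertically from `(x, t)` to `(x, a)` costs at most `|t - a|`.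
  exact ⟨(x, a), ha, (hup x t a).trans_lt haR⟩

theorem warped_product_excisive {M : Type*}
    (δ : (M × {t : ℝ // 1 ≤ t}) → (M × {t : ℝ // 1 ≤ t}) → ℝ)
    (hzero : ∀ p, δ p p = 0)
    (hsep : ∀ p q, δ p q = 0 → p = q)
    (hsymm : ∀ p q, δ p q = δ q p)
    (htri : ∀ p q r, δ p r ≤ δ p q + δ q r)
    (hlow : ∀ (x x' : M) (t t' : {t : ℝ // 1 ≤ t}), |t.1 - t'.1| ≤ δ (x, t) (x', t'))
    (hup : ∀ (x : M) (t t' : {t : ℝ // 1 ≤ t}), δ (x, t) (x, t') ≤ |t.1 - t'.1|)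
    (A₁ A₂ : Set {t : ℝ // 1 ≤ t})
    (hcover : A₁ ∪ A₂ = Set.univ)
    (hex : ∀ r > (0 : ℝ), ∃ R > (0 : ℝ), ∀ t : {t : ℝ // 1 ≤ t},
      (∃ a ∈ A₁, |t.1 - a.1| < r) → (∃ a ∈ A₂, |t.1 - a.1| < r) →
      ∃ a ∈ A₁ ∩ A₂, |t.1 - a.1| < R) :
    ∀ r > (0 : ℝ), ∃ R' > (0 : ℝ), ∀ p : M × {t : ℝ // 1 ≤ t},
      (∃ q : M × {t : ℝ // 1 ≤ t}, q.2 ∈ A₁ ∧ δ p q < r) →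
      (∃ q : M × {t : ℝ // 1 ≤ t}, q.2 ∈ A₂ ∧ δ p q < r) →
      ∃ q : M × {t : ℝ // 1 ≤ t}, q.2 ∈ A₁ ∩ A₂ ∧ δ p q < R' :=
  warped_product_excisive_general δ hlow hup A₁ A₂ hex
end

section
/- Let I₁ = ⋃_{n ∈ ℕ} [2^{2n}, 2^{2n+1}] and I₂ = ⋃_{n ∈ ℕ} [2^{2n+1}, 2^{2n+2}], both subsets of [1, ∞). Then for every x ∈ [1, ∞), dist(x, {2^k : k ≥ 1}) ≤ max(dist(x, I₁), dist(x, I₂)). In particular, I₁ and I₂ form an excisive pair in [1, ∞) with I₁ ∩ I₂ = {2^k : k ≥ 1}. -/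
/-!
Cut `[1, ∞)` into the dyadic intervals `[2^j, 2^(j+1)]`; `I₁` is the union of those with `j`
even and `I₂` of those with `j` odd, and two distinct dyadic intervals meet only in a power
of two. A point `x ∈ [2^m, 2^(m+1)]` lies in one of `I₁, I₂`, and every point `y` of the other
one lies in a dyadic interval other than the `m`-th, so an endpoint `2^m` or `2^(m+1)` of the
`m`-th interval lies between `x` and `y`. Hence `dist(x, {2^k}) ≤ dist(x, y)`.
-/

open Metric Set

lemma Metric.infDist_le_infDist_of_forall_exists_dist_le {α : Type*} [PseudoMetricSpace α]
    {x : α} {s t : Set α} (hs : s.Nonempty) (h : ∀ y ∈ s, ∃ z ∈ t, dist x z ≤ dist x y) :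
    infDist x t ≤ infDist x s :=
  (le_infDist hs).2 fun y hy =>
    let ⟨_, hz, hzy⟩ := h y hy
    (infDist_le_dist_of_mem hz).trans hzy

def dyadicInterval (j : ℕ) : Set ℝ := Icc (2 ^ j) (2 ^ (j + 1))

lemma Nat.ne_of_even_of_odd {j k : ℕ} (hj : Even j) (hk : Odd k) : j ≠ k := by
  rintro rfl
  exact Nat.not_even_iff_odd.2 hk hj

lemma mem_iUnion_even_dyadicInterval {x : ℝ} :
    x ∈ ⋃ n : ℕ, Icc ((2 : ℝ) ^ (2 * n)) (2 ^ (2 * n + 1)) ↔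
      ∃ j, Even j ∧ x ∈ dyadicInterval j := by
  simp only [mem_iUnion, even_iff_exists_two_mul, dyadicInterval]
  constructor
  · rintro ⟨n, hx⟩
    exact ⟨2 * n, ⟨n, rfl⟩, hx⟩
  · rintro ⟨_, ⟨n, rfl⟩, hx⟩
    exact ⟨n, hx⟩

lemma mem_iUnion_odd_dyadicInterval {x : ℝ} :
    x ∈ ⋃ n : ℕ, Icc ((2 : ℝ) ^ (2 * n + 1)) (2 ^ (2 * n + 2)) ↔
      ∃ j, Odd j ∧ x ∈ dyadicInterval j := by
  simp only [mem_iUnion, Odd, dyadicInterval]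
  constructor
  · rintro ⟨n, hx⟩
    exact ⟨2 * n + 1, ⟨n, rfl⟩, hx⟩
  · rintro ⟨_, ⟨n, rfl⟩, hx⟩
    exact ⟨n, hx⟩

lemma exists_mem_dyadicInterval {x : ℝ} (hx : 1 ≤ x) : ∃ j, x ∈ dyadicInterval j := by
  obtain ⟨j, hj, hxj⟩ := exists_nat_pow_near hx one_lt_two
  exact ⟨j, hj, hxj.le⟩

lemma two_pow_mem_dyadicInterval (j : ℕ) : (2 : ℝ) ^ j ∈ dyadicInterval j :=
  left_mem_Icc.2 (pow_le_pow_right₀ one_le_two j.le_succ)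

lemma two_pow_succ_mem_dyadicInterval (j : ℕ) : (2 : ℝ) ^ (j + 1) ∈ dyadicInterval j :=
  right_mem_Icc.2 (pow_le_pow_right₀ one_le_two j.le_succ)

lemma eq_two_pow_of_mem_dyadicInterval_of_lt {x : ℝ} {j k : ℕ} (hj : x ∈ dyadicInterval j)
    (hk : x ∈ dyadicInterval k) (hjk : j < k) : x = 2 ^ k := by
  have hkj : k ≤ j + 1 := (pow_le_pow_iff_right₀ one_lt_two).1 (hk.1.trans hj.2)
  obtain rfl : k = j + 1 := by omega
  exact le_antisymm hj.2 hk.1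

lemma exists_two_pow_dist_le {x y : ℝ} {m j : ℕ} (hx : x ∈ dyadicInterval m)
    (hy : y ∈ dyadicInterval j) (hjm : j ≠ m) :
    ∃ k, 1 ≤ k ∧ dist x (2 ^ k) ≤ dist x y := by
  rw [dyadicInterval, mem_Icc] at hx hy
  rcases hjm.lt_or_gt with hlt | hgt
  · have hym : y ≤ 2 ^ m := hy.2.trans (pow_le_pow_right₀ one_le_two hlt)
    refine ⟨m, by omega, ?_⟩
    rw [Real.dist_eq, Real.dist_eq, abs_of_nonneg (by linarith), abs_of_nonneg (by linarith)]
    linarith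
  · have hym : (2 : ℝ) ^ (m + 1) ≤ y := (pow_le_pow_right₀ one_le_two hgt).trans hy.1
    refine ⟨m + 1, by omega, ?_⟩
    rw [dist_comm x, dist_comm x, Real.dist_eq, Real.dist_eq, abs_of_nonneg (by linarith),
      abs_of_nonneg (by linarith)]
    linarith

lemma infDist_powers_le_infDist {x : ℝ} {m : ℕ} {s : Set ℝ} (hx : x ∈ dyadicInterval m)
    (hs : s.Nonempty) (h : ∀ y ∈ s, ∃ j ≠ m, y ∈ dyadicInterval j) :
    infDist x {y : ℝ | ∃ k : ℕ, 1 ≤ k ∧ y = 2 ^ k} ≤ infDist x s :=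
  infDist_le_infDist_of_forall_exists_dist_le hs fun y hy =>
    let ⟨_, hjm, hyj⟩ := h y hy
    let ⟨k, hk, hdist⟩ := exists_two_pow_dist_le hx hyj hjm
    ⟨2 ^ k, ⟨k, hk, rfl⟩, hdist⟩

theorem exp_intervals_excisive :
    (⋃ n : ℕ, Set.Icc ((2 : ℝ) ^ (2 * n)) ((2 : ℝ) ^ (2 * n + 1))) ∩
      (⋃ n : ℕ, Set.Icc ((2 : ℝ) ^ (2 * n + 1)) ((2 : ℝ) ^ (2 * n + 2))) =
      {y : ℝ | ∃ k : ℕ, 1 ≤ k ∧ y = 2 ^ k} ∧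
    ∀ x ∈ Set.Ici (1 : ℝ),
      Metric.infDist x {y : ℝ | ∃ k : ℕ, 1 ≤ k ∧ y = 2 ^ k} ≤
        max (Metric.infDist x (⋃ n : ℕ, Set.Icc ((2 : ℝ) ^ (2 * n)) ((2 : ℝ) ^ (2 * n + 1))))
          (Metric.infDist x (⋃ n : ℕ, Set.Icc ((2 : ℝ) ^ (2 * n + 1)) ((2 : ℝ) ^ (2 * n + 2)))) := by
  refine ⟨Set.ext fun y => ?_, fun x hx => ?_⟩
  · rw [mem_inter_iff, mem_iUnion_even_dyadicInterval, mem_iUnion_odd_dyadicInterval]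
    constructor
    · rintro ⟨⟨j, hj, hyj⟩, ⟨k, hk, hyk⟩⟩
      rcases (Nat.ne_of_even_of_odd hj hk).lt_or_gt with hlt | hgt
      · exact ⟨k, by omega, eq_two_pow_of_mem_dyadicInterval_of_lt hyj hyk hlt⟩
      · exact ⟨j, by omega, eq_two_pow_of_mem_dyadicInterval_of_lt hyk hyj hgt⟩
    · rintro ⟨_, hk, rfl⟩
      obtain ⟨i, rfl⟩ := Nat.exists_eq_add_of_le' hk
      rcases Nat.even_or_odd i with hi | hi
      · exact ⟨⟨i, hi, two_pow_succ_mem_dyadicInterval i⟩,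
          ⟨i + 1, hi.add_one, two_pow_mem_dyadicInterval _⟩⟩
      · exact ⟨⟨i + 1, hi.add_one, two_pow_mem_dyadicInterval _⟩,
          ⟨i, hi, two_pow_succ_mem_dyadicInterval i⟩⟩
  · obtain ⟨m, hm⟩ := exists_mem_dyadicInterval hx
    rcases Nat.even_or_odd m with hm_even | hm_odd
    · refine (infDist_powers_le_infDist hm ⟨2, mem_iUnion.2 ⟨0, by norm_num⟩⟩ ?_).trans
        (le_max_right _ _)
      rintro y hy
      obtain ⟨j, hj, hyj⟩ := mem_iUnion_odd_dyadicInterval.1 hy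
      exact ⟨j, (Nat.ne_of_even_of_odd hm_even hj).symm, hyj⟩
    · refine (infDist_powers_le_infDist hm ⟨1, mem_iUnion.2 ⟨0, by norm_num⟩⟩ ?_).trans
        (le_max_left _ _)
      rintro y hy
      obtain ⟨j, hj, hyj⟩ := mem_iUnion_even_dyadicInterval.1 hy
      exact ⟨j, Nat.ne_of_even_of_odd hj hm_odd, hyj⟩
end

section
/- Let I₁ = ⋃_{n ∈ ℕ} [2^{2n}, 2^{2n+1}] ⊆ ℝ and define u : I₁ → ℝ by u(t) = 2^{2n+1} when t ∈ [2^{2n}, 2^{2n+1}]. Then |u(t) − u(t′)| ≤ 4|t − t′| for all t, t′ ∈ I₁. In particular u is a 4-Lipschitz retraction of I₁ onto {2^{2n+1} : n ∈ ℕ}. -/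
/-!
Two distinct components `[4ⁿ, 2·4ⁿ]` and `[4ᵐ, 2·4ᵐ]` (`n < m`) are separated by a gap of
length at least `4ᵐ - 2·4ⁿ ≥ 4ᵐ / 2`, while their top endpoints differ by less than `2·4ᵐ`;
inside one component `u` is constant.
-/

open Set

lemma abs_two_mul_sub_two_mul_le_four_mul_abs_sub {a b t t' : ℝ} (ha : 0 ≤ a) (hab : 3 * a ≤ b)
    (ht : t ≤ 2 * a) (ht' : b ≤ t') : |2 * a - 2 * b| ≤ 4 * |t - t'| := by
  calc |2 * a - 2 * b| = 2 * b - 2 * a := by rw [abs_sub_comm, abs_of_nonneg (by linarith)]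
    _ ≤ 4 * (t' - t) := by linarith
    _ ≤ 4 * |t - t'| := by rw [abs_sub_comm]; gcongr; exact le_abs_self _

lemma three_mul_two_pow_two_mul_le {n m : ℕ} (hnm : n < m) :
    3 * (2 : ℝ) ^ (2 * n) ≤ 2 ^ (2 * m) :=
  calc 3 * (2 : ℝ) ^ (2 * n) ≤ 2 ^ 2 * 2 ^ (2 * n) := by gcongr; norm_num
    _ = 2 ^ (2 * n + 2) := by ring
    _ ≤ 2 ^ (2 * m) := pow_le_pow_right₀ one_le_two (by omega)

lemma abs_two_pow_sub_two_pow_le_of_mem_Icc {n m : ℕ} {t t' : ℝ} (hnm : n ≤ m)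
    (ht : t ∈ Icc ((2 : ℝ) ^ (2 * n)) (2 ^ (2 * n + 1)))
    (ht' : t' ∈ Icc ((2 : ℝ) ^ (2 * m)) (2 ^ (2 * m + 1))) :
    |(2 : ℝ) ^ (2 * n + 1) - 2 ^ (2 * m + 1)| ≤ 4 * |t - t'| := by
  obtain rfl | hlt := hnm.eq_or_lt
  · simp
  simp only [pow_succ, mul_comm _ (2 : ℝ)] at ht ⊢
  exact abs_two_mul_sub_two_mul_le_four_mul_abs_sub (by positivity)
    (three_mul_two_pow_two_mul_le hlt) ht.2 ht'.1

theorem collapse_to_top_lipschitz (u : ℝ → ℝ)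
    (hu : ∀ n : ℕ, ∀ t ∈ Set.Icc ((2 : ℝ) ^ (2 * n)) ((2 : ℝ) ^ (2 * n + 1)),
      u t = 2 ^ (2 * n + 1)) :
    ∀ t ∈ ⋃ n : ℕ, Set.Icc ((2 : ℝ) ^ (2 * n)) ((2 : ℝ) ^ (2 * n + 1)),
      ∀ t' ∈ ⋃ n : ℕ, Set.Icc ((2 : ℝ) ^ (2 * n)) ((2 : ℝ) ^ (2 * n + 1)),
        |u t - u t'| ≤ 4 * |t - t'| := by
  intro t ht t' ht'
  obtain ⟨n, hn⟩ := mem_iUnion.1 ht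
  obtain ⟨m, hm⟩ := mem_iUnion.1 ht'
  rw [hu n t hn, hu m t' hm]
  rcases le_total n m with hnm | hmn
  · exact abs_two_pow_sub_two_pow_le_of_mem_Icc hnm hn hm
  · rw [abs_sub_comm, abs_sub_comm t]
    exact abs_two_pow_sub_two_pow_le_of_mem_Icc hmn hm hn
end

section
/- Let I₁ = ⋃_{n ∈ ℕ} [2^{2n}, 2^{2n+1}] ⊆ ℝ and define h : I₁ × [0, 1] → I₁ by h(t, s) = s·t + (1 − s)·2^{2n+1} for t ∈ [2^{2n}, 2^{2n+1}]. Then h is well-defined (h(t, s) ∈ I₁), continuous, h(t, 1) = t, h(t, 0) = 2^{2n+1} for t ∈ [2^{2n}, 2^{2n+1}], and the family {h(·, s)}_{s ∈ [0,1]} is equi-Lipschitz: |h(t, s) − h(t′, s)| ≤ 4|t − t′| for all t, t′ ∈ I₁ and all s ∈ [0, 1]. -/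
/-!
On its component `[2^{2n}, 2^{2n+1}]` of `I₁`, `h(·, s)` is the affine contraction
`t ↦ s t + (1 - s) 2^{2n+1}` towards the top endpoint, so it keeps the component and is
`1`-Lipschitz there. Two points in components `n < m` are at distance at least `2^{2m} / 2`, since
the gap below the `m`-th component is half its left endpoint, while any two points of the first
`m + 1` components are at distance at most `2^{2m+1}`: this gives the factor `4`, whatever `s` is.
Continuity is checked component by component, the components forming a locally finite family of
closed sets.
-/

open Set Filter

theorem locallyFinite_of_subset_Ici {ι α : Type*} [LinearOrder α] [TopologicalSpace α]
    [OrderTopology α] [NoMaxOrder α] {s : ι → Set α} {a : ι → α}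
    (hs : ∀ i, s i ⊆ Ici (a i)) (ha : Tendsto a cofinite atTop) : LocallyFinite s := by
  intro x
  obtain ⟨y, hxy⟩ := exists_gt x
  refine ⟨Iio y, Iio_mem_nhds hxy, ?_⟩
  have hfin : {i | a i < y}.Finite := by
    simpa only [not_le] using eventually_cofinite.mp (ha.eventually_ge_atTop y)
  refine hfin.subset ?_
  rintro i ⟨z, hzs, hzy⟩
  exact lt_of_le_of_lt (hs i hzs) hzy

theorem affine_collapse_mem_Icc {a b t s : ℝ} (ht : t ∈ Icc a b) (hs : s ∈ Icc (0 : ℝ) 1) :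
    s * t + (1 - s) * b ∈ Icc a b :=
  convex_Icc a b ht (right_mem_Icc.mpr (ht.1.trans ht.2)) hs.1 (sub_nonneg.mpr hs.2)
    (add_sub_cancel s 1)

/-- The `n`-th component `[2^{2n}, 2^{2n+1}]` of `I₁`. -/
def evenDyadicInterval (n : ℕ) : Set ℝ := Icc (2 ^ (2 * n)) (2 ^ (2 * n + 1))

theorem locallyFinite_evenDyadicInterval : LocallyFinite evenDyadicInterval := by
  refine locallyFinite_of_subset_Ici (a := fun n => (2 : ℝ) ^ (2 * n))
    (fun n => Icc_subset_Ici_self) ?_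
  rw [Nat.cofinite_eq_atTop]
  exact (tendsto_pow_atTop_atTop_of_one_lt one_lt_two).comp
    (tendsto_id.const_mul_atTop' two_pos)

theorem pow_le_two_mul_sub_of_mem_evenDyadicInterval {n m : ℕ} (hnm : n < m) {x y : ℝ}
    (hx : x ∈ evenDyadicInterval n) (hy : y ∈ evenDyadicInterval m) :
    (2 : ℝ) ^ (2 * m) ≤ 2 * (y - x) := by
  have hpow : (2 : ℝ) ^ (2 * n + 1) * 2 ≤ 2 ^ (2 * m) := by
    rw [← pow_succ]; exact pow_le_pow_right₀ one_le_two (by omega)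
  linarith [hx.2, hy.1]

theorem abs_sub_le_four_mul_of_mem_evenDyadicInterval {n m : ℕ} (hnm : n ≠ m) {x x' y y' : ℝ}
    (hx : x ∈ evenDyadicInterval n) (hx' : x' ∈ evenDyadicInterval n)
    (hy : y ∈ evenDyadicInterval m) (hy' : y' ∈ evenDyadicInterval m) :
    |x' - y'| ≤ 4 * |x - y| := by
  wlog hlt : n < m generalizing n m x x' y y'
  · rw [abs_sub_comm x', abs_sub_comm x]
    exact this hnm.symm hy hy' hx hx' (by omega)
  have hgap := pow_le_two_mul_sub_of_mem_evenDyadicInterval hlt hx hy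
  have hgap' := pow_le_two_mul_sub_of_mem_evenDyadicInterval hlt hx' hy'
  have htop : (2 : ℝ) ^ (2 * m + 1) = 2 * 2 ^ (2 * m) := by ring
  have hpos : (0 : ℝ) < 2 ^ (2 * m) := by positivity
  rw [abs_sub_comm x', abs_of_pos (by linarith), abs_sub_comm x, abs_of_pos (by linarith)]
  linarith [hx'.1, hy'.2, pow_pos (two_pos (α := ℝ)) (2 * n)]

section Collapse

variable {h : ℝ → ℝ → ℝ} (hh : ∀ n : ℕ, ∀ t ∈ evenDyadicInterval n,
  ∀ s ∈ Icc (0 : ℝ) 1, h t s = s * t + (1 - s) * 2 ^ (2 * n + 1))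
include hh

theorem collapse_mem_evenDyadicInterval {n : ℕ} {t s : ℝ} (ht : t ∈ evenDyadicInterval n)
    (hs : s ∈ Icc (0 : ℝ) 1) : h t s ∈ evenDyadicInterval n :=
  hh n t ht s hs ▸ affine_collapse_mem_Icc ht hs

theorem continuousOn_collapse :
    ContinuousOn (fun p : ℝ × ℝ => h p.1 p.2)
      ((⋃ n, evenDyadicInterval n) ×ˢ Icc (0 : ℝ) 1) := by
  rw [iUnion_prod_const]
  refine (locallyFinite_evenDyadicInterval.preimage_continuous continuous_fst).subset
    (fun n => prod_subset_preimage_fst _ _) |>.continuousOn_iUnion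
    (fun n => isClosed_Icc.prod isClosed_Icc) fun n => ?_
  refine ContinuousOn.congr (f := fun p : ℝ × ℝ => p.2 * p.1 + (1 - p.2) * 2 ^ (2 * n + 1))
    (by fun_prop) ?_
  rintro p ⟨hp₁, hp₂⟩
  exact hh n p.1 hp₁ p.2 hp₂

theorem abs_collapse_sub_le_four_mul {s : ℝ} (hs : s ∈ Icc (0 : ℝ) 1) {t t' : ℝ}
    (ht : t ∈ ⋃ n, evenDyadicInterval n) (ht' : t' ∈ ⋃ n, evenDyadicInterval n) :
    |h t s - h t' s| ≤ 4 * |t - t'| := by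
  obtain ⟨n, htn⟩ := mem_iUnion.mp ht
  obtain ⟨m, htm⟩ := mem_iUnion.mp ht'
  obtain rfl | hnm := eq_or_ne n m
  · have hdiff : h t s - h t' s = s * (t - t') := by
      rw [hh n t htn s hs, hh n t' htm s hs]
      ring
    calc |h t s - h t' s| = s * |t - t'| := by rw [hdiff, abs_mul, abs_of_nonneg hs.1]
      _ ≤ 1 * |t - t'| := by gcongr; exact hs.2
      _ ≤ 4 * |t - t'| := by gcongr; norm_num
  · exact abs_sub_le_four_mul_of_mem_evenDyadicInterval hnm htn
      (collapse_mem_evenDyadicInterval hh htn hs) htm (collapse_mem_evenDyadicInterval hh htm hs)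

end Collapse

theorem collapse_homotopy_equi_lipschitz (h : ℝ → ℝ → ℝ)
    (hh : ∀ n : ℕ, ∀ t ∈ Set.Icc ((2 : ℝ) ^ (2 * n)) ((2 : ℝ) ^ (2 * n + 1)),
      ∀ s ∈ Set.Icc (0 : ℝ) 1, h t s = s * t + (1 - s) * 2 ^ (2 * n + 1)) :
    (∀ t ∈ ⋃ n : ℕ, Set.Icc ((2 : ℝ) ^ (2 * n)) ((2 : ℝ) ^ (2 * n + 1)),
      ∀ s ∈ Set.Icc (0 : ℝ) 1,
        h t s ∈ ⋃ n : ℕ, Set.Icc ((2 : ℝ) ^ (2 * n)) ((2 : ℝ) ^ (2 * n + 1))) ∧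
    ContinuousOn (fun p : ℝ × ℝ => h p.1 p.2)
      ((⋃ n : ℕ, Set.Icc ((2 : ℝ) ^ (2 * n)) ((2 : ℝ) ^ (2 * n + 1))) ×ˢ Set.Icc (0 : ℝ) 1) ∧
    (∀ t ∈ ⋃ n : ℕ, Set.Icc ((2 : ℝ) ^ (2 * n)) ((2 : ℝ) ^ (2 * n + 1)), h t 1 = t) ∧
    (∀ n : ℕ, ∀ t ∈ Set.Icc ((2 : ℝ) ^ (2 * n)) ((2 : ℝ) ^ (2 * n + 1)),
      h t 0 = 2 ^ (2 * n + 1)) ∧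
    (∀ s ∈ Set.Icc (0 : ℝ) 1,
      ∀ t ∈ ⋃ n : ℕ, Set.Icc ((2 : ℝ) ^ (2 * n)) ((2 : ℝ) ^ (2 * n + 1)),
        ∀ t' ∈ ⋃ n : ℕ, Set.Icc ((2 : ℝ) ^ (2 * n)) ((2 : ℝ) ^ (2 * n + 1)),
          |h t s - h t' s| ≤ 4 * |t - t'|) := by
  refine ⟨fun t ht s hs => ?_, continuousOn_collapse hh, fun t ht => ?_,
    fun n t ht => ?_, fun s hs t ht t' ht' => abs_collapse_sub_le_four_mul hh hs ht ht'⟩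
  · obtain ⟨n, htn⟩ := mem_iUnion.mp ht
    exact mem_iUnion.mpr ⟨n, collapse_mem_evenDyadicInterval hh htn hs⟩
  · obtain ⟨n, htn⟩ := mem_iUnion.mp ht
    rw [hh n t htn 1 (right_mem_Icc.mpr zero_le_one)]
    ring
  · rw [hh n t ht 0 (left_mem_Icc.mpr zero_le_one)]
    ring
end

section
/- Let H₁, H₂ be Hilbert spaces, t ∈ B(H₁) a compact operator, and s ∈ B(H₂) an operator such that s·M_g and M_g·s are compact for every g ∈ C₀(ℝ), where M_g denotes multiplication on H₂ = L²([1,∞)). Then for every f ∈ C₀(M × [1,∞)) (M a compact metric measure space, H₁ = L²(M)), both (t ⊗ s)·M_f and M_f·(t ⊗ s) are compact operators on H₁ ⊗ H₂ ≅ L²(M × [1,∞)). -/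
/-!
Every `f ∈ C₀(M × [1,∞))` factors as `f = (1 ⊗ g) · f'` with `g ∈ C₀([1,∞))` and
`f' ∈ C₀(M × [1,∞))`: the function `G x = sup_m |f (m, x)| + 1/x` is positive and, `M` being
compact, vanishes at infinity, so `g = √G` and `f' = f / (1 ⊗ √G)` work, as `|f'| ≤ 1 ⊗ √G`.
Hence `(t ⊗ s) M_f = (t ⊗ s M_g) M_{f'}` and `M_f (t ⊗ s) = M_{f'} (t ⊗ M_g s)` are compact,
because `t ⊗ s M_g` and `t ⊗ M_g s` are tensor products of compact operators.
-/

open scoped ZeroAtInfty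
open Filter Topology

theorem Filter.cocompact_prod_eq_comap_snd (K X : Type*) [TopologicalSpace K] [CompactSpace K]
    [TopologicalSpace X] : cocompact (K × X) = comap Prod.snd (cocompact X) := by
  rw [← coprod_cocompact, cocompact_eq_bot, Filter.coprod, comap_bot, bot_sup_eq]

theorem Filter.tendsto_snd_cocompact (K X : Type*) [TopologicalSpace K] [CompactSpace K]
    [TopologicalSpace X] : Tendsto Prod.snd (cocompact (K × X)) (cocompact X) := by
  rw [Filter.cocompact_prod_eq_comap_snd]
  exact tendsto_comap

namespace ZeroAtInftyContinuousMap

variable {K X E : Type*} [TopologicalSpace K] [TopologicalSpace X] [NormedAddCommGroup E]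

def slice (f : C₀(K × X, E)) : C(X, C(K, E)) :=
  ((f : C(K × X, E)).comp ContinuousMap.prodSwap).curry

@[simp]
theorem slice_apply (f : C₀(K × X, E)) (x : X) (m : K) : f.slice x m = f (m, x) :=
  rfl

variable [CompactSpace K]

noncomputable def sliceNorm (f : C₀(K × X, E)) : C₀(X, ℝ) where
  toFun x := ‖f.slice x‖
  continuous_toFun := (map_continuous _).norm
  zero_at_infty' := by
    rw [Metric.tendsto_nhds]
    intro ε hε
    have hf := Metric.tendsto_nhds.mp (zero_at_infty f) ε hε
    rw [Filter.cocompact_prod_eq_comap_snd] at hf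
    obtain ⟨S, hS, hSf⟩ := hf
    filter_upwards [hS] with x hx
    rw [dist_zero_right, norm_norm, ContinuousMap.norm_lt_iff _ hε]
    intro m
    simpa using hSf (show (m, x).2 ∈ S from hx)

theorem sliceNorm_nonneg (f : C₀(K × X, E)) (x : X) : 0 ≤ f.sliceNorm x :=
  norm_nonneg (f.slice x)

theorem norm_le_sliceNorm (f : C₀(K × X, E)) (m : K) (x : X) : ‖f (m, x)‖ ≤ f.sliceNorm x :=
  (f.slice x).norm_coe_le_norm m

theorem exists_eq_comp_snd_mul (f : C₀(K × X, ℂ)) (h : C₀(X, ℝ)) (hpos : ∀ x, 0 < h x) :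
    ∃ (g : C₀(X, ℂ)) (f' : C₀(K × X, ℂ)), ∀ p, f p = g p.2 * f' p := by
  set G : C₀(X, ℝ) := f.sliceNorm + h
  have hG_pos (x : X) : 0 < G x := add_pos_of_nonneg_of_pos (f.sliceNorm_nonneg x) (hpos x)
  have hsqrtG_ne (x : X) : ((√(G x) : ℝ) : ℂ) ≠ 0 := by
    exact_mod_cast (Real.sqrt_pos.2 (hG_pos x)).ne'
  let g : C₀(X, ℂ) :=
    { toFun x := (√(G x) : ℂ)
      continuous_toFun := by fun_prop
      zero_at_infty' := by
        have hsqrt := (Real.continuous_sqrt.tendsto 0).comp (zero_at_infty G)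
        rw [Real.sqrt_zero] at hsqrt
        simpa [Function.comp_def] using (Complex.continuous_ofReal.tendsto 0).comp hsqrt }
  have hf'_le (p : K × X) : ‖f p / g p.2‖ ≤ ‖g p.2‖ := by
    have hg_norm : ‖g p.2‖ = √(G p.2) := by
      simp [g, Real.sqrt_nonneg]
    rw [norm_div, hg_norm, div_le_iff₀ (Real.sqrt_pos.2 (hG_pos p.2)),
      Real.mul_self_sqrt (hG_pos p.2).le]
    calc ‖f p‖ ≤ f.sliceNorm p.2 := f.norm_le_sliceNorm p.1 p.2
      _ ≤ G p.2 := le_add_of_nonneg_right (hpos p.2).le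
  let f' : C₀(K × X, ℂ) :=
    { toFun p := f p / g p.2
      continuous_toFun := by
        have : Continuous fun p : K × X => g p.2 := by fun_prop
        exact (map_continuous f).div this fun p => hsqrtG_ne p.2
      zero_at_infty' := squeeze_zero_norm hf'_le <| tendsto_zero_iff_norm_tendsto_zero.1 <|
        (zero_at_infty g).comp (tendsto_snd_cocompact K X) }
  exact ⟨g, f', fun p => (mul_div_cancel₀ (f p) (hsqrtG_ne p.2)).symm⟩

end ZeroAtInftyContinuousMap

theorem exists_pos_zeroAtInfty_Ici : ∃ h : C₀({t : ℝ // 1 ≤ t}, ℝ), ∀ x, 0 < h x := by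
  have hx_pos (x : {t : ℝ // 1 ≤ t}) : (0 : ℝ) < x := one_pos.trans_le x.2
  refine ⟨⟨⟨fun x => (x : ℝ)⁻¹, ?_⟩, ?_⟩, fun x => inv_pos.2 (hx_pos x)⟩
  · exact continuous_subtype_val.inv₀ fun x => (hx_pos x).ne'
  · have hval := (isClosed_Ici (a := (1 : ℝ))).isClosedEmbedding_subtypeVal.tendsto_cocompact
    rw [← Metric.cobounded_eq_cocompact (α := ℝ)] at hval
    exact tendsto_inv₀_cobounded.comp hval

theorem tensor_with_locally_compact_is_locally_compact_general
    {M : Type*} [MetricSpace M] [CompactSpace M]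
    {H₁ H₂ H : Type*}
    [NormedAddCommGroup H₁] [InnerProductSpace ℂ H₁] [CompleteSpace H₁]
    [NormedAddCommGroup H₂] [InnerProductSpace ℂ H₂] [CompleteSpace H₂]
    [NormedAddCommGroup H] [InnerProductSpace ℂ H] [CompleteSpace H]
    -- the Hilbert space tensor product structure H ≅ H₁ ⊗ H₂
    (tensor : (H₁ →L[ℂ] H₁) → (H₂ →L[ℂ] H₂) → (H →L[ℂ] H))
    (htensor_comp : ∀ a b c d, tensor (a.comp c) (b.comp d) = (tensor a b).comp (tensor c d))
    (htensor_compact : ∀ (a : H₁ →L[ℂ] H₁) (b : H₂ →L[ℂ] H₂), IsCompactOperator a → IsCompactOperator b →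
      IsCompactOperator (tensor a b))
    -- the representation of C₀(M × [1,∞)) by pointwise multiplication on H ≅ L²(M × [1,∞))
    (ρ : C₀(M × {t : ℝ // 1 ≤ t}, ℂ) → (H →L[ℂ] H))
    (hρmul : ∀ f g, ρ (f * g) = (ρ f).comp (ρ g))
    -- the representation of C₀([1,∞)) by pointwise multiplication on H₂ ≅ L²([1,∞))
    (σ : C₀({t : ℝ // 1 ≤ t}, ℂ) → (H₂ →L[ℂ] H₂))
    -- the embedding g ↦ 1 ⊗ g of C₀([1,∞)) into C₀(M × [1,∞)) and its compatibility
    (oT : C₀({t : ℝ // 1 ≤ t}, ℂ) → C₀(M × {t : ℝ // 1 ≤ t}, ℂ))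
    (hoT : ∀ g p, oT g p = g p.2)
    (hcompat : ∀ g, ρ (oT g) = tensor (ContinuousLinearMap.id ℂ H₁) (σ g))
    -- t is compact, s is locally compact with respect to σ
    (t : H₁ →L[ℂ] H₁) (ht : IsCompactOperator t)
    (s : H₂ →L[ℂ] H₂)
    (hs : ∀ g : C₀({t : ℝ // 1 ≤ t}, ℂ),
      IsCompactOperator (s.comp (σ g)) ∧ IsCompactOperator ((σ g).comp s)) :
    ∀ f : C₀(M × {t : ℝ // 1 ≤ t}, ℂ),
      IsCompactOperator ((tensor t s).comp (ρ f)) ∧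
      IsCompactOperator ((ρ f).comp (tensor t s)) := by
  intro f
  obtain ⟨h, hpos⟩ := exists_pos_zeroAtInfty_Ici
  obtain ⟨g, f', hfactor⟩ := f.exists_eq_comp_snd_mul h hpos
  have hf : f = oT g * f' := by
    ext p
    rw [ZeroAtInftyContinuousMap.mul_apply, hoT, hfactor]
  have hleft : (tensor t s).comp (ρ f) = (tensor t (s.comp (σ g))).comp (ρ f') := by
    rw [hf, hρmul, hcompat, ← ContinuousLinearMap.comp_assoc, ← htensor_comp,
      ContinuousLinearMap.comp_id]
  have hright : (ρ f).comp (tensor t s) = (ρ f').comp (tensor t ((σ g).comp s)) := by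
    rw [hf, mul_comm, hρmul, hcompat, ContinuousLinearMap.comp_assoc, ← htensor_comp,
      ContinuousLinearMap.id_comp]
  rw [hleft, hright]
  exact ⟨(htensor_compact _ _ ht (hs g).1).comp_clm _,
    (htensor_compact _ _ ht (hs g).2).clm_comp _⟩

theorem tensor_with_locally_compact_is_locally_compact
    {M : Type*} [MetricSpace M] [CompactSpace M]
    {H₁ H₂ H : Type*}
    [NormedAddCommGroup H₁] [InnerProductSpace ℂ H₁] [CompleteSpace H₁]
    [NormedAddCommGroup H₂] [InnerProductSpace ℂ H₂] [CompleteSpace H₂]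
    [NormedAddCommGroup H] [InnerProductSpace ℂ H] [CompleteSpace H]
    -- the Hilbert space tensor product structure H ≅ H₁ ⊗ H₂
    (tensor : (H₁ →L[ℂ] H₁) → (H₂ →L[ℂ] H₂) → (H →L[ℂ] H))
    (htensor_comp : ∀ a b c d, tensor (a.comp c) (b.comp d) = (tensor a b).comp (tensor c d))
    (htensor_compact : ∀ (a : H₁ →L[ℂ] H₁) (b : H₂ →L[ℂ] H₂), IsCompactOperator a → IsCompactOperator b →
      IsCompactOperator (tensor a b))
    -- the representation of C₀(M × [1,∞)) by pointwise multiplication on H ≅ L²(M × [1,∞))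
    (ρ : C₀(M × {t : ℝ // 1 ≤ t}, ℂ) → (H →L[ℂ] H))
    (hρmul : ∀ f g, ρ (f * g) = (ρ f).comp (ρ g))
    (hρnorm : ∀ f, ‖ρ f‖ ≤ ‖f‖)
    -- the representation of C₀([1,∞)) by pointwise multiplication on H₂ ≅ L²([1,∞))
    (σ : C₀({t : ℝ // 1 ≤ t}, ℂ) → (H₂ →L[ℂ] H₂))
    -- the embedding g ↦ 1 ⊗ g of C₀([1,∞)) into C₀(M × [1,∞)) and its compatibility
    (oT : C₀({t : ℝ // 1 ≤ t}, ℂ) → C₀(M × {t : ℝ // 1 ≤ t}, ℂ))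
    (hoT : ∀ g p, oT g p = g p.2)
    (hcompat : ∀ g, ρ (oT g) = tensor (ContinuousLinearMap.id ℂ H₁) (σ g))
    -- t is compact, s is locally compact with respect to σ
    (t : H₁ →L[ℂ] H₁) (ht : IsCompactOperator t)
    (s : H₂ →L[ℂ] H₂)
    (hs : ∀ g : C₀({t : ℝ // 1 ≤ t}, ℂ),
      IsCompactOperator (s.comp (σ g)) ∧ IsCompactOperator ((σ g).comp s)) :
    ∀ f : C₀(M × {t : ℝ // 1 ≤ t}, ℂ),
      IsCompactOperator ((tensor t s).comp (ρ f)) ∧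
      IsCompactOperator ((ρ f).comp (tensor t s)) :=
  tensor_with_locally_compact_is_locally_compact_general tensor htensor_comp htensor_compact ρ hρmul
    σ oT hoT hcompat t ht s hs
end

section
/- Let G be an abelian group. Consider the directed system (∏_{k ≥ n} G)_{n ∈ ℕ} with structure maps φ_{n,m}((a_k)_{k ≥ n}) = (Σ_{k=n}^{m} a_k, a_{m+1}, …) for n ≤ m. Let K ⊆ ∏_{k ∈ ℕ} G be the subgroup of finitely supported sequences whose coordinates sum to 0. Then the colimit of this system is isomorphic to (∏_{k ∈ ℕ} G)/K, via the maps induced by extending a sequence in ∏_{k ≥ n} G by zeros in coordinates k < n. -/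
/-- The structure map `φ_{n,m} : ∏_{k ≥ n} G → ∏_{k ≥ m} G` which adds up the
coordinates between `n` and `m` and keeps the remaining ones. -/
def phiStruct {G : Type*} [AddCommGroup G] (n m : ℕ) (h : n ≤ m)
    (a : {k : ℕ // n ≤ k} → G) : {k : ℕ // m ≤ k} → G :=
  fun k =>
    if k.1 = m then ∑ i ∈ Finset.range (m + 1 - n), a ⟨n + i, Nat.le_add_right n i⟩
    else a ⟨k.1, h.trans k.2⟩

/-- The subgroup of `∏_{k ∈ ℕ} G` of finitely supported sequences whose coordinates sum
to `0`. -/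
def sumZeroFinSupp (G : Type*) [AddCommGroup G] : AddSubgroup (ℕ → G) where
  carrier := {a | (Function.support a).Finite ∧ ∑ᶠ k, a k = 0}
  zero_mem' := by
    constructor
    · simpa using Set.finite_empty
    · simp
  add_mem' := by
    rintro a b ⟨ha, ha0⟩ ⟨hb, hb0⟩
    refine ⟨(ha.union hb).subset (Function.support_add a b), ?_⟩
    have : ∑ᶠ k, (a k + b k) = (∑ᶠ k, a k) + ∑ᶠ k, b k := finsum_add_distrib ha hb
    simpa [ha0, hb0] using this
  neg_mem' := by
    rintro a ⟨ha, ha0⟩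
    refine ⟨by simpa [Function.support_neg] using ha, ?_⟩
    have : ∑ᶠ k, (-a) k = -∑ᶠ k, a k := by
      simpa using finsum_neg_distrib (fun k => a k)
    simpa [ha0] using this

/-- Extension by zero of an element of `∏_{k ≥ n} G` to `∏_{k ∈ ℕ} G`. -/
def extZero {G : Type*} [AddCommGroup G] (n : ℕ) (a : {k : ℕ // n ≤ k} → G) : ℕ → G :=
  fun k => if h : n ≤ k then a ⟨k, h⟩ else 0

/-! Every element of the colimit already comes from stage `0`, i.e. from `∏_{k ∈ ℕ} G`, and a
sequence `b` of stage `0` dies at some stage iff `b ∈ K`: pushed to a stage `m` beyond its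
support, `b` collapses to the single coordinate `∑ₖ b k`. So a compatible family `θ` factors
uniquely through `θ 0` on `(∏_{k ∈ ℕ} G) ⧸ K`. -/

section

variable {G : Type*} [AddCommGroup G]

lemma mem_sumZeroFinSupp_iff_of_support_subset {b : ℕ → G} {s : Finset ℕ}
    (hs : Function.support b ⊆ s) : b ∈ sumZeroFinSupp G ↔ ∑ k ∈ s, b k = 0 := by
  change (Function.support b).Finite ∧ _ ↔ _
  rw [finsum_eq_sum_of_support_subset b hs]
  exact and_iff_right (s.finite_toSet.subset hs)

lemma extZero_phiStruct_sub_mem (n m : ℕ) (h : n ≤ m) (a : {k : ℕ // n ≤ k} → G) :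
    extZero m (phiStruct n m h a) - extZero n a ∈ sumZeroFinSupp G := by
  have hsupp : Function.support (extZero m (phiStruct n m h a) - extZero n a) ⊆
      Finset.Ico n (m + 1) := by
    intro k hk
    by_contra hk'
    simp only [Finset.coe_Ico, Set.mem_Ico, not_and_or, not_le, not_lt] at hk'
    refine hk ?_
    rcases hk' with hkn | hmk
    · simp [extZero, show ¬ m ≤ k by omega, show ¬ n ≤ k by omega]
    · simp [extZero, phiStruct, show m ≤ k by omega, show n ≤ k by omega,
        show k ≠ m by omega]
  rw [mem_sumZeroFinSupp_iff_of_support_subset hsupp]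
  simp only [Pi.sub_apply]
  rw [Finset.sum_sub_distrib, sub_eq_zero]
  have hmem : m ∈ Finset.Ico n (m + 1) := Finset.mem_Ico.2 ⟨h, m.lt_succ_self⟩
  rw [Finset.sum_eq_single_of_mem m hmem fun k hk hkm => by
    simp [extZero, show ¬ m ≤ k by simp at hk; omega], Finset.sum_Ico_eq_sum_range]
  simp [extZero, phiStruct]

lemma phiStruct_zero_extZero (n : ℕ) (a : {k : ℕ // n ≤ k} → G) :
    phiStruct 0 n n.zero_le (extZero n a ∘ Subtype.val) = a := by
  funext ⟨k, hk⟩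
  by_cases hkn : k = n
  · subst hkn
    rw [phiStruct, if_pos rfl, Finset.sum_eq_single_of_mem k (by simp) fun i hi hik => by
      simp [extZero, show ¬ k ≤ i by simp at hi; omega]]
    simp [extZero]
  · simp [phiStruct, extZero, hkn, hk]

lemma exists_phiStruct_eq_zero_of_mem {b : ℕ → G} (hb : b ∈ sumZeroFinSupp G) :
    ∃ m, phiStruct 0 m m.zero_le (b ∘ Subtype.val) = 0 := by
  obtain ⟨m, hm⟩ := hb.1.bddAbove
  have hsupp : Function.support b ⊆ Finset.range (m + 1) := fun k hk =>
    by simpa [Nat.lt_succ_iff] using hm hk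
  have hsum := (mem_sumZeroFinSupp_iff_of_support_subset hsupp).1 hb
  refine ⟨m, funext fun ⟨k, hk⟩ => ?_⟩
  by_cases hkm : k = m
  · simpa [phiStruct, hkm] using hsum
  · simpa [phiStruct, hkm] using Function.notMem_support.1 fun h => hkm (by
      have := hm h; omega)

end

theorem colimit_is_prod_mod_sumZero {G : Type*} [AddCommGroup G] :
    (∀ (n m : ℕ) (h : n ≤ m) (a : {k : ℕ // n ≤ k} → G),
      (QuotientAddGroup.mk (extZero m (phiStruct n m h a)) : (ℕ → G) ⧸ sumZeroFinSupp G) =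
        QuotientAddGroup.mk (extZero n a)) ∧
    (∀ (C : Type*) [AddCommGroup C] (θ : ∀ n : ℕ, ({k : ℕ // n ≤ k} → G) →+ C),
      (∀ (n m : ℕ) (h : n ≤ m) (a : {k : ℕ // n ≤ k} → G),
        θ m (phiStruct n m h a) = θ n a) →
      ∃! u : ((ℕ → G) ⧸ sumZeroFinSupp G) →+ C,
        ∀ (n : ℕ) (a : {k : ℕ // n ≤ k} → G),
          u (QuotientAddGroup.mk (extZero n a)) = θ n a) := by
  refine ⟨fun n m h a => QuotientAddGroup.eq_iff_sub_mem.2 (extZero_phiStruct_sub_mem n m h a),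
    fun C _ θ hθ => ?_⟩
  let restrict : (ℕ → G) →+ ({k : ℕ // 0 ≤ k} → G) :=
    (LinearMap.funLeft ℤ G Subtype.val).toAddMonoidHom
  have hker : sumZeroFinSupp G ≤ ((θ 0).comp restrict).ker := fun b hb => by
    obtain ⟨m, hm⟩ := exists_phiStruct_eq_zero_of_mem hb
    change θ 0 (b ∘ Subtype.val) = 0
    rw [← hθ 0 m m.zero_le, hm, map_zero]
  refine ⟨QuotientAddGroup.lift _ _ hker, fun n a => ?_, fun u hu => ?_⟩
  · change θ 0 (extZero n a ∘ Subtype.val) = θ n a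
    rw [← hθ 0 n n.zero_le, phiStruct_zero_extZero]
  · refine QuotientAddGroup.addMonoidHom_ext _ (AddMonoidHom.ext fun b => ?_)
    have hb : extZero 0 (restrict b) = b := by funext k; simp [extZero, restrict]
    simpa [hb] using hu 0 (restrict b)
end
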